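/- Let G be a connected simple graph of order n with diam(G) = 2 and β(G) = n − 3, and let G* be its twin graph. If diam(G*) = 1 (that is, G* is a complete graph), then G* ≅ K_3 and G* has at most one vertex of type (1K). -/

import Mathlib

/-!
Since `G*` is complete, vertices in different twin classes are adjacent. A class of type (1K)
therefore consists of universal vertices, and vertices of two such classes would be twins:
so at most one class is of type (1K) and every other class is of type (N).

Twins are not separated by any third vertex, so a resolving set misses at most one vertex per
class, giving `β(G) ≥ n - n(G*)`. Conversely, deleting one representative per class leaves a
resolving set: of two representatives of distinct classes, one lies in a class of type (N),
and another vertex of that class is at distance 2 from it and at distance 1 from the other.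
Hence `n - n(G*) = β(G) = n - 3`, and `n(G*) < n` because the two vertices at distance 2 are
twins; so `n(G*) = 3`.
-/

namespace PaperMetricDim

open SimpleGraph

variable {V : Type*}

/-- A set `W` of vertices resolves the graph `G`: any two distinct vertices have
different distance to some vertex of `W`. -/
def Resolves (G : SimpleGraph V) (W : Set V) : Prop :=
  ∀ u v : V, u ≠ v → ∃ w ∈ W, G.dist u w ≠ G.dist v w

/-- The metric dimension of `G`: the minimum cardinality of a resolving set. -/
noncomputable def metricDim (G : SimpleGraph V) : ℕ :=
  sInf {k : ℕ | ∃ W : Set V, Resolves G W ∧ W.ncard = k}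

/-- `G` is connected and has diameter exactly `d`. -/
def diamEq (G : SimpleGraph V) (d : ℕ) : Prop :=
  G.Connected ∧ (∀ u v : V, G.dist u v ≤ d) ∧ ∃ u v : V, G.dist u v = d

/-- A set of vertices is homogeneous if it induces a complete or an empty subgraph. -/
def Homogeneous (G : SimpleGraph V) (S : Set V) : Prop :=
  (∀ a ∈ S, ∀ b ∈ S, a ≠ b → G.Adj a b) ∨ (∀ a ∈ S, ∀ b ∈ S, ¬ G.Adj a b)

/-- Two distinct vertices are twins: they have the same neighbours apart from
each other. -/
def Twins (G : SimpleGraph V) (u v : V) : Prop :=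
  u ≠ v ∧ G.neighborSet u \ {v} = G.neighborSet v \ {u}

/-- The twin equivalence relation: equal or twins. -/
def twinRel (G : SimpleGraph V) (u v : V) : Prop := u = v ∨ Twins G u v

/-- The twin class of a vertex. -/
def twinClass (G : SimpleGraph V) (v : V) : Set V := {u : V | twinRel G v u}

/-- The vertices of the twin graph: twin equivalence classes. -/
def TwinVertex (G : SimpleGraph V) : Type _ := {S : Set V // ∃ v : V, S = twinClass G v}

/-- The twin graph `G*` of `G`: twin classes, two distinct classes being
adjacent iff (some, equivalently all) representatives are adjacent in `G`. -/
def twinGraph (G : SimpleGraph V) : SimpleGraph (TwinVertex G) where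
  Adj A B := A ≠ B ∧ ∃ a ∈ A.1, ∃ b ∈ B.1, G.Adj a b
  symm := ⟨by
    rintro A B ⟨hne, a, ha, b, hb, hab⟩
    exact ⟨hne.symm, b, hb, a, ha, hab.symm⟩⟩
  loopless := ⟨by rintro A ⟨hne, -⟩; exact hne rfl⟩

/-- The twin class of `v`, as a vertex of the twin graph. -/
def cls (G : SimpleGraph V) (v : V) : TwinVertex G := ⟨twinClass G v, v, rfl⟩

/-- A twin-graph vertex of type (1): a singleton class. -/
def typeOne (G : SimpleGraph V) (A : TwinVertex G) : Prop := ∃ v : V, A.1 = {v}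

/-- A twin-graph vertex of type (K): a class with at least two vertices inducing
a complete subgraph. -/
def typeK (G : SimpleGraph V) (A : TwinVertex G) : Prop :=
  A.1.Nontrivial ∧ ∀ a ∈ A.1, ∀ b ∈ A.1, a ≠ b → G.Adj a b

/-- A twin-graph vertex of type (N): a class with at least two vertices inducing
an empty subgraph. -/
def typeN (G : SimpleGraph V) (A : TwinVertex G) : Prop :=
  A.1.Nontrivial ∧ ∀ a ∈ A.1, ∀ b ∈ A.1, ¬ G.Adj a b

/-- Type (1K): type (1) or type (K). -/
def type1K (G : SimpleGraph V) (A : TwinVertex G) : Prop := typeOne G A ∨ typeK G A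

/-- Type (1N): type (1) or type (N). -/
def type1N (G : SimpleGraph V) (A : TwinVertex G) : Prop := typeOne G A ∨ typeN G A

/-- Type (KN): type (K) or type (N). -/
def typeKN (G : SimpleGraph V) (A : TwinVertex G) : Prop := typeK G A ∨ typeN G A

/-- `Γ_i(v)`: the set of vertices at distance `i` from `v`. -/
def Gamma (G : SimpleGraph V) (i : ℕ) (v : V) : Set V := {u : V | G.dist u v = i}

/-- `Γ_i^*(v^*)`: the set of twin-graph vertices at distance `i` from `v^*`. -/
def GammaStar (G : SimpleGraph V) (i : ℕ) (v : V) : Set (TwinVertex G) :=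
  {A : TwinVertex G | (twinGraph G).dist A (cls G v) = i}

/-- `R_1(v)`: neighbours of `v` having a neighbour at distance 2 from `v`. -/
def R1 (G : SimpleGraph V) (v : V) : Set V :=
  {x ∈ Gamma G 1 v | ∃ y ∈ Gamma G 2 v, G.Adj x y}

/-- `R_2(v) = Γ_1(v) \ R_1(v)`. -/
def R2 (G : SimpleGraph V) (v : V) : Set V := Gamma G 1 v \ R1 G v

/-- `R_1^*(v^*)`: twin-graph neighbours of `v^*` having a neighbour in `Γ_2^*(v^*)`. -/
def R1Star (G : SimpleGraph V) (v : V) : Set (TwinVertex G) :=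
  {A ∈ GammaStar G 1 v | ∃ B ∈ GammaStar G 2 v, (twinGraph G).Adj A B}

/-- `R_2^*(v^*) = Γ_1^*(v^*) \ R_1^*(v^*)`. -/
def R2Star (G : SimpleGraph V) (v : V) : Set (TwinVertex G) :=
  GammaStar G 1 v \ R1Star G v

/-- `M_1(x) = Γ_1(v) ∩ Γ_1(x)` (for `x ∈ Γ_1(v)`). -/
def M1 (G : SimpleGraph V) (v x : V) : Set V := Gamma G 1 v ∩ Gamma G 1 x

/-- `M_2(x) = Γ_1(v) ∩ Γ_2(x)` (for `x ∈ Γ_1(v)`). -/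
def M2 (G : SimpleGraph V) (v x : V) : Set V := Gamma G 1 v ∩ Gamma G 2 x

/-- Structure `G_1`: the twin graph is `K_3` and has at most one vertex of type (1K). -/
def structG1 (G : SimpleGraph V) : Prop :=
  ∃ a b c : TwinVertex G, a ≠ b ∧ a ≠ c ∧ b ≠ c ∧
    (∀ X : TwinVertex G, X = a ∨ X = b ∨ X = c) ∧
    (twinGraph G).Adj a b ∧ (twinGraph G).Adj a c ∧ (twinGraph G).Adj b c ∧
    (∀ X Y : TwinVertex G, type1K G X → type1K G Y → X = Y)

/-- Structure `G_2`: the twin graph is the path `P_3` with (a) centre of type (N)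
and some leaf of type (K), or (b) one leaf of type (K) and the other of type (KN). -/
def structG2 (G : SimpleGraph V) : Prop :=
  ∃ a b c : TwinVertex G, a ≠ b ∧ a ≠ c ∧ b ≠ c ∧
    (∀ X : TwinVertex G, X = a ∨ X = b ∨ X = c) ∧
    (twinGraph G).Adj a b ∧ (twinGraph G).Adj b c ∧ ¬ (twinGraph G).Adj a c ∧
    ((typeN G b ∧ (typeK G a ∨ typeK G c)) ∨
     (typeK G a ∧ typeKN G c) ∨ (typeK G c ∧ typeKN G a))

/-- Structure `G_3`: the twin graph is the paw, the triangle being `u, p, q` with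
the pendant vertex `l` attached to `u`; `p` is of type (N), `q` of type (1K),
`l` of type (1N); and if `q` is of type (K) then neither `l` nor `u` is of type (N). -/
def structG3 (G : SimpleGraph V) : Prop :=
  ∃ u p q l : TwinVertex G,
    u ≠ p ∧ u ≠ q ∧ u ≠ l ∧ p ≠ q ∧ p ≠ l ∧ q ≠ l ∧
    (∀ X : TwinVertex G, X = u ∨ X = p ∨ X = q ∨ X = l) ∧
    (twinGraph G).Adj u p ∧ (twinGraph G).Adj u q ∧ (twinGraph G).Adj p q ∧
    (twinGraph G).Adj u l ∧ ¬ (twinGraph G).Adj p l ∧ ¬ (twinGraph G).Adj q l ∧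
    typeN G p ∧ type1K G q ∧ type1N G l ∧
    (typeK G q → ¬ typeN G l ∧ ¬ typeN G u)

/-- Structure `G_4`: the twin graph is the cycle `C_5` and every vertex is of type (1). -/
def structG4 (G : SimpleGraph V) : Prop :=
  ∃ v0 v1 v2 v3 v4 : TwinVertex G,
    v0 ≠ v1 ∧ v0 ≠ v2 ∧ v0 ≠ v3 ∧ v0 ≠ v4 ∧ v1 ≠ v2 ∧ v1 ≠ v3 ∧ v1 ≠ v4 ∧
    v2 ≠ v3 ∧ v2 ≠ v4 ∧ v3 ≠ v4 ∧
    (∀ X : TwinVertex G, X = v0 ∨ X = v1 ∨ X = v2 ∨ X = v3 ∨ X = v4) ∧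
    (twinGraph G).Adj v0 v1 ∧ (twinGraph G).Adj v1 v2 ∧ (twinGraph G).Adj v2 v3 ∧
    (twinGraph G).Adj v3 v4 ∧ (twinGraph G).Adj v4 v0 ∧
    ¬ (twinGraph G).Adj v0 v2 ∧ ¬ (twinGraph G).Adj v1 v3 ∧ ¬ (twinGraph G).Adj v2 v4 ∧
    ¬ (twinGraph G).Adj v3 v0 ∧ ¬ (twinGraph G).Adj v4 v1 ∧
    (∀ X : TwinVertex G, typeOne G X)

/-- Structure `G_5`: the twin graph is `C_5` with one chord (cycle `v0 v1 v2 v3 v4`,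
chord `v0 v2`); the two adjacent degree-2 vertices `v3, v4` are of type (1), the
other vertices of type (1K). -/
def structG5 (G : SimpleGraph V) : Prop :=
  ∃ v0 v1 v2 v3 v4 : TwinVertex G,
    v0 ≠ v1 ∧ v0 ≠ v2 ∧ v0 ≠ v3 ∧ v0 ≠ v4 ∧ v1 ≠ v2 ∧ v1 ≠ v3 ∧ v1 ≠ v4 ∧
    v2 ≠ v3 ∧ v2 ≠ v4 ∧ v3 ≠ v4 ∧
    (∀ X : TwinVertex G, X = v0 ∨ X = v1 ∨ X = v2 ∨ X = v3 ∨ X = v4) ∧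
    (twinGraph G).Adj v0 v1 ∧ (twinGraph G).Adj v1 v2 ∧ (twinGraph G).Adj v2 v3 ∧
    (twinGraph G).Adj v3 v4 ∧ (twinGraph G).Adj v4 v0 ∧ (twinGraph G).Adj v0 v2 ∧
    ¬ (twinGraph G).Adj v1 v3 ∧ ¬ (twinGraph G).Adj v1 v4 ∧ ¬ (twinGraph G).Adj v2 v4 ∧
    typeOne G v3 ∧ typeOne G v4 ∧ type1K G v0 ∧ type1K G v1 ∧ type1K G v2

/-- Structure `G_6`: the twin graph is `C_5` with two adjacent chords (cycle
`v0 v1 v2 v3 v4`, chords `v0 v2` and `v0 v3`, so `v0` has degree 4); `v0` is of any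
type, the other vertices of type (1K); no two non-adjacent vertices are both of
type (K), and no two adjacent vertices have the different types (K) and (N). -/
def structG6 (G : SimpleGraph V) : Prop :=
  ∃ v0 v1 v2 v3 v4 : TwinVertex G,
    v0 ≠ v1 ∧ v0 ≠ v2 ∧ v0 ≠ v3 ∧ v0 ≠ v4 ∧ v1 ≠ v2 ∧ v1 ≠ v3 ∧ v1 ≠ v4 ∧
    v2 ≠ v3 ∧ v2 ≠ v4 ∧ v3 ≠ v4 ∧
    (∀ X : TwinVertex G, X = v0 ∨ X = v1 ∨ X = v2 ∨ X = v3 ∨ X = v4) ∧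
    (twinGraph G).Adj v0 v1 ∧ (twinGraph G).Adj v1 v2 ∧ (twinGraph G).Adj v2 v3 ∧
    (twinGraph G).Adj v3 v4 ∧ (twinGraph G).Adj v4 v0 ∧ (twinGraph G).Adj v0 v2 ∧
    (twinGraph G).Adj v0 v3 ∧
    ¬ (twinGraph G).Adj v1 v3 ∧ ¬ (twinGraph G).Adj v1 v4 ∧ ¬ (twinGraph G).Adj v2 v4 ∧
    type1K G v1 ∧ type1K G v2 ∧ type1K G v3 ∧ type1K G v4 ∧
    (∀ X Y : TwinVertex G, X ≠ Y → ¬ (twinGraph G).Adj X Y →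
      ¬ (typeK G X ∧ typeK G Y)) ∧
    (∀ X Y : TwinVertex G, (twinGraph G).Adj X Y → ¬ (typeK G X ∧ typeN G Y))

/-- Structure `G_7`: the twin graph is the kite (`K_4` minus an edge, vertices
`a, b` of degree 3 in the kite and `c, d` the non-adjacent pair) with a pendant
vertex `l` attached to the degree-3 vertex `a`; `l` is of type (1), `a` and `b`
are of type (1K), one of `c, d` is of type (K) and the other of type (1). -/
def structG7 (G : SimpleGraph V) : Prop :=
  ∃ a b c d l : TwinVertex G,
    a ≠ b ∧ a ≠ c ∧ a ≠ d ∧ a ≠ l ∧ b ≠ c ∧ b ≠ d ∧ b ≠ l ∧ c ≠ d ∧ c ≠ l ∧ d ≠ l ∧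
    (∀ X : TwinVertex G, X = a ∨ X = b ∨ X = c ∨ X = d ∨ X = l) ∧
    (twinGraph G).Adj a b ∧ (twinGraph G).Adj a c ∧ (twinGraph G).Adj a d ∧
    (twinGraph G).Adj b c ∧ (twinGraph G).Adj b d ∧ (twinGraph G).Adj a l ∧
    ¬ (twinGraph G).Adj c d ∧ ¬ (twinGraph G).Adj b l ∧ ¬ (twinGraph G).Adj c l ∧
    ¬ (twinGraph G).Adj d l ∧
    typeOne G l ∧ type1K G a ∧ type1K G b ∧ typeK G c ∧ typeOne G d

/-- Structure `G_8`: the twin graph is the kite (`K_4` minus an edge, `a, b` of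
degree 3 and `c, d` the non-adjacent degree-2 pair); one degree-2 vertex `c` is of
type (K) and the other `d` of type (1); one degree-3 vertex `a` is of type (N)
and the other `b` of type (1K). -/
def structG8 (G : SimpleGraph V) : Prop :=
  ∃ a b c d : TwinVertex G,
    a ≠ b ∧ a ≠ c ∧ a ≠ d ∧ b ≠ c ∧ b ≠ d ∧ c ≠ d ∧
    (∀ X : TwinVertex G, X = a ∨ X = b ∨ X = c ∨ X = d) ∧
    (twinGraph G).Adj a b ∧ (twinGraph G).Adj a c ∧ (twinGraph G).Adj a d ∧
    (twinGraph G).Adj b c ∧ (twinGraph G).Adj b d ∧ ¬ (twinGraph G).Adj c d ∧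
    typeN G a ∧ type1K G b ∧ typeK G c ∧ typeOne G d

/-- Structure `G_9`: the twin graph is `C_4`, two adjacent vertices of type (K)
and the other two of type (1). -/
def structG9 (G : SimpleGraph V) : Prop :=
  ∃ v0 v1 v2 v3 : TwinVertex G,
    v0 ≠ v1 ∧ v0 ≠ v2 ∧ v0 ≠ v3 ∧ v1 ≠ v2 ∧ v1 ≠ v3 ∧ v2 ≠ v3 ∧
    (∀ X : TwinVertex G, X = v0 ∨ X = v1 ∨ X = v2 ∨ X = v3) ∧
    (twinGraph G).Adj v0 v1 ∧ (twinGraph G).Adj v1 v2 ∧ (twinGraph G).Adj v2 v3 ∧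
    (twinGraph G).Adj v3 v0 ∧ ¬ (twinGraph G).Adj v0 v2 ∧ ¬ (twinGraph G).Adj v1 v3 ∧
    typeK G v0 ∧ typeK G v1 ∧ typeOne G v2 ∧ typeOne G v3

/-- Structure `G_10`: the twin graph is the wheel `C_4 ∨ K_1` (hub `h`, rim
`v0 v1 v2 v3`); two adjacent rim (degree-3) vertices `v0, v1` are of type (K), the
hub is of type (1K), and the other vertices of type (1). -/
def structG10 (G : SimpleGraph V) : Prop :=
  ∃ h v0 v1 v2 v3 : TwinVertex G,
    h ≠ v0 ∧ h ≠ v1 ∧ h ≠ v2 ∧ h ≠ v3 ∧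
    v0 ≠ v1 ∧ v0 ≠ v2 ∧ v0 ≠ v3 ∧ v1 ≠ v2 ∧ v1 ≠ v3 ∧ v2 ≠ v3 ∧
    (∀ X : TwinVertex G, X = h ∨ X = v0 ∨ X = v1 ∨ X = v2 ∨ X = v3) ∧
    (twinGraph G).Adj h v0 ∧ (twinGraph G).Adj h v1 ∧ (twinGraph G).Adj h v2 ∧
    (twinGraph G).Adj h v3 ∧
    (twinGraph G).Adj v0 v1 ∧ (twinGraph G).Adj v1 v2 ∧ (twinGraph G).Adj v2 v3 ∧
    (twinGraph G).Adj v3 v0 ∧ ¬ (twinGraph G).Adj v0 v2 ∧ ¬ (twinGraph G).Adj v1 v3 ∧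
    typeK G v0 ∧ typeK G v1 ∧ type1K G h ∧ typeOne G v2 ∧ typeOne G v3

section TwinClasses

variable {G : SimpleGraph V}

lemma twins_iff {u v : V} :
    Twins G u v ↔ u ≠ v ∧ ∀ x, x ≠ u → x ≠ v → (G.Adj u x ↔ G.Adj v x) := by
  refine and_congr_right fun _ => ⟨fun h x hxu hxv => ?_, fun h => ?_⟩
  · simpa [hxu, hxv] using Set.ext_iff.mp h x
  · ext x
    simp only [Set.mem_sdiff, mem_neighborSet, Set.mem_singleton_iff]
    constructor
    · rintro ⟨hux, hxv⟩
      exact ⟨(h x hux.ne' hxv).mp hux, hux.ne'⟩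
    · rintro ⟨hvx, hxu⟩
      exact ⟨(h x hxu hvx.ne').mpr hvx, hvx.ne'⟩

lemma Twins.adj_iff {u v x : V} (h : Twins G u v) (hxu : x ≠ u) (hxv : x ≠ v) :
    G.Adj u x ↔ G.Adj v x :=
  (twins_iff.mp h).2 x hxu hxv

lemma Twins.symm {u v : V} (h : Twins G u v) : Twins G v u := ⟨h.1.symm, h.2.symm⟩

lemma Twins.trans {u v w : V} (h₁ : Twins G u v) (h₂ : Twins G v w) (huw : u ≠ w) :
    Twins G u w := by
  refine twins_iff.mpr ⟨huw, fun x hxu hxw => ?_⟩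
  rcases eq_or_ne x v with rfl | hxv
  · calc G.Adj u x ↔ G.Adj x u := G.adj_comm u x
      _ ↔ G.Adj w u := h₂.adj_iff h₁.1 huw
      _ ↔ G.Adj u w := G.adj_comm w u
      _ ↔ G.Adj x w := h₁.adj_iff huw.symm h₂.1.symm
      _ ↔ G.Adj w x := G.adj_comm x w
  · exact (h₁.adj_iff hxu hxv).trans (h₂.adj_iff hxv hxw)

/-- Reroute the first step of a shortest walk from `u` through its twin `v`. -/
lemma Twins.dist_le {u v w : V} (h : Twins G u v) (hwu : w ≠ u) (hr : G.Reachable u w) :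
    G.dist v w ≤ G.dist u w := by
  obtain ⟨p, hp⟩ := hr.exists_walk_length_eq_dist
  cases p with
  | nil => exact absurd rfl hwu
  | @cons _ x _ hux q =>
    rw [← hp, Walk.length_cons]
    rcases eq_or_ne x v with rfl | hxv
    · exact (SimpleGraph.dist_le q).trans (Nat.le_succ _)
    · exact SimpleGraph.dist_le (Walk.cons ((h.adj_iff hux.ne' hxv).mp hux) q)

lemma Twins.dist_eq (hconn : G.Connected) {u v w : V} (h : Twins G u v) (hwu : w ≠ u)
    (hwv : w ≠ v) : G.dist u w = G.dist v w :=
  le_antisymm (h.symm.dist_le hwv (hconn v w)) (h.dist_le hwu (hconn u w))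

lemma twinRel_equivalence : Equivalence (twinRel G) where
  refl _ := Or.inl rfl
  symm := by
    rintro _ _ (rfl | h)
    exacts [Or.inl rfl, Or.inr h.symm]
  trans := by
    rintro u v w (rfl | h₁) (rfl | h₂)
    · exact Or.inl rfl
    · exact Or.inr h₂
    · exact Or.inr h₁
    · rcases eq_or_ne u w with huw | huw
      exacts [Or.inl huw, Or.inr (h₁.trans h₂ huw)]

lemma twins_of_mem_twinClass {v x y : V} (hx : x ∈ twinClass G v) (hy : y ∈ twinClass G v)
    (hxy : x ≠ y) : Twins G x y :=
  (twinRel_equivalence.trans (twinRel_equivalence.symm hx) hy).resolve_left hxy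

lemma mem_cls (x : V) : x ∈ (cls G x).1 := twinRel_equivalence.refl x

lemma eq_cls_of_mem {A : TwinVertex G} {x : V} (hx : x ∈ A.1) : A = cls G x := by
  obtain ⟨v, hv⟩ := A.2
  refine Subtype.ext (hv.trans (Set.ext fun y => ?_))
  rw [hv] at hx
  exact ⟨twinRel_equivalence.trans (twinRel_equivalence.symm hx),
    twinRel_equivalence.trans hx⟩

lemma cls_surjective : Function.Surjective (cls G) := fun A =>
  let ⟨x, hx⟩ := A.2
  ⟨x, (eq_cls_of_mem (hx ▸ mem_cls x : x ∈ A.1)).symm⟩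

lemma homogeneous_twinClass (v : V) : Homogeneous G (twinClass G v) := by
  set C := twinClass G v
  have key : ∀ a ∈ C, ∀ b ∈ C, ∀ c ∈ C, a ≠ b → c ≠ b → (G.Adj a b ↔ G.Adj c b) := by
    intro a ha b hb c hc hab hcb
    rcases eq_or_ne a c with rfl | hac
    · rfl
    · exact (twins_of_mem_twinClass ha hc hac).adj_iff hab.symm hcb.symm
  by_cases h : ∃ a ∈ C, ∃ b ∈ C, G.Adj a b
  · obtain ⟨a, ha, b, hb, hab⟩ := h
    left
    intro c hc d hd hcd
    rcases eq_or_ne c b with rfl | hcb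
    · exact ((key a ha c hc d hd hab.ne hcd.symm).mp hab).symm
    · have hcb' : G.Adj c b := (key a ha b hb c hc hab.ne hcb).mp hab
      exact ((key b hb c hc d hd hcb.symm hcd.symm).mp hcb'.symm).symm
  · right
    push Not at h
    exact h

lemma typeN_of_not_type1K {A : TwinVertex G} (hA : ¬ type1K G A) : typeN G A := by
  obtain ⟨v, hv⟩ := A.2
  have hvA : v ∈ A.1 := hv ▸ mem_cls v
  have hnt : A.1.Nontrivial := by
    by_contra hsub
    exact hA (Or.inl ⟨v, (Set.not_nontrivial_iff.mp hsub).eq_singleton_of_mem hvA⟩)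
  refine ⟨hnt, ?_⟩
  rcases hv ▸ homogeneous_twinClass (G := G) v with hK | hN
  exacts [absurd (Or.inr ⟨hnt, hK⟩) hA, hN]

lemma twinGraph_adj_cls_iff {u v : V} :
    (twinGraph G).Adj (cls G u) (cls G v) ↔ cls G u ≠ cls G v ∧ G.Adj u v := by
  refine ⟨fun ⟨hne, a, ha, b, hb, hab⟩ => ⟨hne, ?_⟩,
    fun ⟨hne, huv⟩ => ⟨hne, u, mem_cls u, v, mem_cls v, huv⟩⟩
  have hdisj : ∀ {x y : V}, x ∈ (cls G u).1 → y ∈ (cls G v).1 → x ≠ y := fun hx hy hxy =>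
    hne ((eq_cls_of_mem hx).trans (hxy ▸ eq_cls_of_mem hy).symm)
  have hub : G.Adj u b := by
    obtain hua | hua : twinRel G u a := id ha
    exacts [hua ▸ hab, (hua.adj_iff (hdisj (mem_cls u) hb).symm (hdisj ha hb).symm).mpr hab]
  obtain hvb | hvb : twinRel G v b := id hb
  exacts [hvb ▸ hub, ((hvb.adj_iff (hdisj (mem_cls u) (mem_cls v)) (hdisj (mem_cls u) hb)).mpr
    hub.symm).symm]

end TwinClasses

lemma eq_top_of_diamEq_one {W : Type*} {H : SimpleGraph W} (h : diamEq H 1) : H = ⊤ := by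
  obtain ⟨hconn, hle, -⟩ := h
  ext A B
  refine ⟨Adj.ne, fun hAB => dist_eq_one_iff_adj.mp ?_⟩
  exact le_antisymm (hle A B) (hconn.pos_dist_of_ne hAB)

section MetricDimension

variable {G : SimpleGraph V}

instance [Finite V] : Finite (TwinVertex G) := Subtype.finite

lemma card_twinVertex_lt [Finite V] {u v : V} (hne : u ≠ v) (h : cls G u = cls G v) :
    Nat.card (TwinVertex G) < Nat.card V := by
  refine (Nat.card_le_card_of_surjective _ cls_surjective).lt_of_ne fun hcard => hne ?_
  exact (cls_surjective.bijective_of_nat_card_le hcard.ge).1 h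

lemma dist_eq_two_of_not_adj (hconn : G.Connected) (hdiam : ∀ u v, G.dist u v ≤ 2) {u v : V}
    (hne : u ≠ v) (hadj : ¬ G.Adj u v) : G.dist u v = 2 := by
  have h0 := hconn.pos_dist_of_ne hne
  have h1 : G.dist u v ≠ 1 := mt dist_eq_one_iff_adj.mp hadj
  have h2 := hdiam u v
  omega

lemma resolves_univ (hconn : G.Connected) : Resolves G Set.univ := fun u _ huv =>
  ⟨u, trivial, by rw [dist_self]; exact (hconn.pos_dist_of_ne huv.symm).ne⟩

lemma Resolves.injOn_cls_compl (hconn : G.Connected) {W : Set V} (hW : Resolves G W) :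
    Set.InjOn (cls G) Wᶜ := by
  intro x hx y hy hxy
  by_contra hne
  obtain ⟨w, hw, hd⟩ := hW x y hne
  have hy' : y ∈ (cls G x).1 := by rw [hxy]; exact mem_cls y
  have htw : Twins G x y := twins_of_mem_twinClass (mem_cls x) hy' hne
  exact hd (htw.dist_eq hconn (fun h => hx (h ▸ hw)) (fun h => hy (h ▸ hw)))

lemma card_sub_card_twinVertex_le_metricDim [Finite V] (hconn : G.Connected) :
    Nat.card V - Nat.card (TwinVertex G) ≤ metricDim G := by
  refine le_csInf ⟨_, Set.univ, resolves_univ hconn, rfl⟩ ?_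
  rintro _ ⟨W, hW, rfl⟩
  have hcompl : Wᶜ.ncard ≤ Nat.card (TwinVertex G) := by
    rw [← (hW.injOn_cls_compl hconn).ncard_image]
    exact Set.ncard_le_card _
  have hsum := Set.ncard_add_ncard_compl W
  omega

lemma adj_of_cls_ne (htop : twinGraph G = ⊤) {u v : V} (h : cls G u ≠ cls G v) : G.Adj u v :=
  (twinGraph_adj_cls_iff.mp (by rw [htop]; exact h)).2

lemma adj_of_mem_of_type1K (htop : twinGraph G = ⊤) {A : TwinVertex G} (hA : type1K G A)
    {u x : V} (hu : u ∈ A.1) (hxu : x ≠ u) : G.Adj u x := by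
  by_cases hx : x ∈ A.1
  · rcases hA with ⟨w, hw⟩ | ⟨-, hK⟩
    · rw [hw, Set.mem_singleton_iff] at hu hx
      exact absurd (hx.trans hu.symm) hxu
    · exact hK u hu x hx hxu.symm
  · refine adj_of_cls_ne htop fun h => hx ?_
    rw [eq_cls_of_mem hu, h]
    exact mem_cls x

/-- Vertices of two classes of type (1K) are universal, hence twins. -/
lemma eq_of_type1K (htop : twinGraph G = ⊤) {A B : TwinVertex G} (hA : type1K G A)
    (hB : type1K G B) : A = B := by
  obtain ⟨a, rfl⟩ := cls_surjective A
  obtain ⟨b, rfl⟩ := cls_surjective B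
  rcases eq_or_ne a b with rfl | hab
  · rfl
  have htw : Twins G a b := twins_iff.mpr ⟨hab, fun x hxa hxb =>
    iff_of_true (adj_of_mem_of_type1K htop hA (mem_cls a) hxa)
      (adj_of_mem_of_type1K htop hB (mem_cls b) hxb)⟩
  exact eq_cls_of_mem (Or.inr htw : b ∈ (cls G a).1)

section Representatives

variable {rep : TwinVertex G → V}

/-- A class `A` not of type (1K) is of type (N), so a second vertex `w` of `A` is at
distance 2 from `rep A` and adjacent to `rep B`. -/
lemma exists_mem_compl_range_dist_ne (hconn : G.Connected) (hdiam : ∀ u v, G.dist u v ≤ 2)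
    (htop : twinGraph G = ⊤) (hrep : ∀ A, cls G (rep A) = A) {A B : TwinVertex G}
    (hAB : A ≠ B) (hA : ¬ type1K G A) :
    ∃ w ∈ (Set.range rep)ᶜ, G.dist (rep A) w ≠ G.dist (rep B) w := by
  obtain ⟨hnt, hN⟩ := typeN_of_not_type1K hA
  obtain ⟨w, hwA, hw⟩ := hnt.exists_ne (rep A)
  have hAw : A = cls G w := eq_cls_of_mem hwA
  refine ⟨w, ?_, ?_⟩
  · rintro ⟨C, rfl⟩
    exact hw (by rw [hAw, hrep])
  · have hrepA : rep A ∈ A.1 := by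
      simpa only [hrep] using mem_cls (G := G) (rep A)
    have h2 : G.dist (rep A) w = 2 :=
      dist_eq_two_of_not_adj hconn hdiam hw.symm (hN _ hrepA _ hwA)
    have h1 : G.dist (rep B) w = 1 :=
      dist_eq_one_iff_adj.mpr (adj_of_cls_ne htop (by rw [hrep, ← hAw]; exact hAB.symm))
    omega

lemma resolves_compl_range (hconn : G.Connected) (hdiam : ∀ u v, G.dist u v ≤ 2)
    (htop : twinGraph G = ⊤) (hrep : ∀ A, cls G (rep A) = A) :
    Resolves G (Set.range rep)ᶜ := by
  intro x y hxy
  by_cases hx : x ∈ (Set.range rep)ᶜ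
  · exact ⟨x, hx, by rw [dist_self]; exact (hconn.pos_dist_of_ne hxy.symm).ne⟩
  by_cases hy : y ∈ (Set.range rep)ᶜ
  · exact ⟨y, hy, by rw [dist_self]; exact (hconn.pos_dist_of_ne hxy).ne'⟩
  obtain ⟨A, rfl⟩ := not_not.mp hx
  obtain ⟨B, rfl⟩ := not_not.mp hy
  have hAB : A ≠ B := fun h => hxy (h ▸ rfl)
  by_cases hA : type1K G A
  · have hB : ¬ type1K G B := fun hB => hAB (eq_of_type1K htop hA hB)
    obtain ⟨w, hw, hd⟩ := exists_mem_compl_range_dist_ne hconn hdiam htop hrep hAB.symm hB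
    exact ⟨w, hw, hd.symm⟩
  · exact exists_mem_compl_range_dist_ne hconn hdiam htop hrep hAB hA

end Representatives

lemma metricDim_le_card_sub_card_twinVertex [Finite V] (hconn : G.Connected)
    (hdiam : ∀ u v, G.dist u v ≤ 2) (htop : twinGraph G = ⊤) :
    metricDim G ≤ Nat.card V - Nat.card (TwinVertex G) := by
  have hrep : ∀ A, cls G (Function.surjInv cls_surjective A) = A :=
    Function.surjInv_eq cls_surjective
  refine Nat.sInf_le ⟨_, resolves_compl_range hconn hdiam htop hrep, ?_⟩
  rw [Set.ncard_compl, Set.ncard_range_of_injective (Function.injective_surjInv _)]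

end MetricDimension

/-- If `G` is connected of order `n` with diameter 2 and `β(G) = n - 3`, and the
twin graph `G*` has diameter 1 (i.e. is complete), then `G* ≅ K_3` (it is a
complete graph on 3 vertices) and it has at most one vertex of type (1K). -/
theorem twinGraph_complete_case
    {V : Type*} [Fintype V] (G : SimpleGraph V)
    (hdiam : diamEq G 2)
    (hbeta : metricDim G = Fintype.card V - 3)
    (hstar : diamEq (twinGraph G) 1) :
    Nat.card (TwinVertex G) = 3 ∧
      (∀ A B : TwinVertex G, A ≠ B → (twinGraph G).Adj A B) ∧
      (∀ A B : TwinVertex G, type1K G A → type1K G B → A = B) := by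
  obtain ⟨hconn, hdiam, u, v, huv⟩ := hdiam
  have htop : twinGraph G = ⊤ := eq_top_of_diamEq_one hstar
  have hdim : metricDim G = Nat.card V - Nat.card (TwinVertex G) :=
    (metricDim_le_card_sub_card_twinVertex hconn hdiam htop).antisymm
      (card_sub_card_twinVertex_le_metricDim hconn)
  have hne : u ≠ v := by rintro rfl; simp at huv
  have hcls : cls G u = cls G v := by
    by_contra h
    have := dist_eq_one_iff_adj.mpr (adj_of_cls_ne htop h)
    omega
  have hlt := card_twinVertex_lt hne hcls
  have hcard : Nat.card V = Fintype.card V := Nat.card_eq_fintype_card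
  refine ⟨by omega, fun A B hAB => by rw [htop]; exact hAB, fun A B => eq_of_type1K htop⟩

end PaperMetricDim
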